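/- Let f : ℝⁿ → ℝⁿ be analytic, x, y ∈ ℝⁿ with Df(x) invertible, γ = sup_{k≥2} ‖Df(x)⁻¹ D^k f(x)/k!‖^{1/(k-1)} finite, and ν = ‖x - y‖·γ < 1 - √2/2. Then Df(y) is invertible and ‖Df(y)⁻¹ Df(x)‖ ≤ (1-ν)²/ψ(ν), where ψ(ν) = 1 - 4ν + 2ν². -/

import Mathlib

noncomputable section

open Metric Filter

/-- The inverse of the derivative of `f` at `x` (zero if not invertible). -/
def dfInv {n : ℕ} (f : EuclideanSpace ℝ (Fin n) → EuclideanSpace ℝ (Fin n))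
    (x : EuclideanSpace ℝ (Fin n)) :
    EuclideanSpace ℝ (Fin n) →L[ℝ] EuclideanSpace ℝ (Fin n) :=
  Ring.inverse (fderiv ℝ f x)

/-- The term `‖Df(x)⁻¹ D^k f(x) / k!‖^(1/(k-1))` of Smale's gamma invariant. -/
def smaleTerm {n : ℕ} (f : EuclideanSpace ℝ (Fin n) → EuclideanSpace ℝ (Fin n))
    (x : EuclideanSpace ℝ (Fin n)) (k : ℕ) : ℝ :=
  (‖(dfInv f x).compContinuousMultilinearMap (iteratedFDeriv ℝ k f x)‖ /
      (Nat.factorial k : ℝ)) ^ ((1 : ℝ) / ((k : ℝ) - 1))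

/-- Smale's gamma invariant `γ(f,x) = sup_{k ≥ 2} ‖Df(x)⁻¹ D^k f(x)/k!‖^(1/(k-1))`. -/
def smaleGamma {n : ℕ} (f : EuclideanSpace ℝ (Fin n) → EuclideanSpace ℝ (Fin n))
    (x : EuclideanSpace ℝ (Fin n)) : ℝ :=
  ⨆ k : ℕ, smaleTerm f x (k + 2)

/-- Smale's beta invariant `β(f,x) = ‖Df(x)⁻¹ f(x)‖`, the Newton step length. -/
def smaleBeta {n : ℕ} (f : EuclideanSpace ℝ (Fin n) → EuclideanSpace ℝ (Fin n))
    (x : EuclideanSpace ℝ (Fin n)) : ℝ :=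
  ‖dfInv f x (f x)‖

/-- The Newton operator `N_f(x) = x - Df(x)⁻¹ f(x)`. -/
def newton {n : ℕ} (f : EuclideanSpace ℝ (Fin n) → EuclideanSpace ℝ (Fin n))
    (x : EuclideanSpace ℝ (Fin n)) : EuclideanSpace ℝ (Fin n) :=
  x - dfInv f x (f x)

/-- `ψ(u) = 1 - 4u + 2u²`. -/
def psi (u : ℝ) : ℝ := 1 - 4 * u + 2 * u ^ 2

/-!
Put `g = Df(x)⁻¹ ∘ f`, so that `Dg(x) = 1`. By the definition of `γ = γ(f,x)`, the `k`-th Taylor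
coefficient `D^{k+1}g(x)/k!` of `Dg` at `x` has norm at most `(k+1)γ^k`, so the Taylor series of
`Dg` converges on the ball of radius `1/γ` and, by the identity theorem, sums to `Dg` there. At `y`
this gives `‖Dg(y) - 1‖ ≤ ∑_{k≥1} (k+1)ν^k = (1-ν)⁻² - 1`, and `2 - (1-ν)⁻² = ψ(ν)/(1-ν)² > 0`.
The Neumann series then inverts `Dg(y) = Df(x)⁻¹ Df(y)` with `‖Dg(y)⁻¹‖ ≤ (1-ν)²/ψ(ν)`.
-/

open scoped NNReal ENNReal Nat ContDiff

section NeumannSeries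

variable {R : Type*} [NormedRing R] [HasSummableGeomSeries R] {a : R}

theorem isUnit_of_norm_sub_one_lt (ha : ‖a - 1‖ < 1) : IsUnit a := by
  simpa using isUnit_one_sub_of_norm_lt_one (x := 1 - a) (by rwa [norm_sub_rev])

theorem norm_ringInverse_le_of_norm_sub_one_lt (h1 : ‖(1 : R)‖ ≤ 1) (ha : ‖a - 1‖ < 1) :
    ‖Ring.inverse a‖ ≤ (1 - ‖a - 1‖)⁻¹ := by
  have ht : ‖1 - a‖ < 1 := by rwa [norm_sub_rev]
  calc ‖Ring.inverse a‖ = ‖∑' n : ℕ, (1 - a) ^ n‖ := by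
        rw [geom_series_eq_inverse _ ht, sub_sub_cancel]
    _ ≤ ‖(1 : R)‖ - 1 + (1 - ‖1 - a‖)⁻¹ := tsum_geometric_le_of_norm_lt_one _ ht
    _ ≤ (1 - ‖a - 1‖)⁻¹ := by rw [norm_sub_rev]; linarith

end NeumannSeries

section TaylorSeries

variable {E F : Type*} [NormedAddCommGroup E] [NormedSpace ℝ E]
  [NormedAddCommGroup F] [NormedSpace ℝ F]

def taylorSeries (g : E → F) (x : E) : FormalMultilinearSeries ℝ E F :=
  fun k => (k ! : ℝ)⁻¹ • iteratedFDeriv ℝ k g x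

theorem hasSum_taylorSeries [CompleteSpace F] {g : E → F} {x w : E}
    (hg : AnalyticOnNhd ℝ g (eball x (taylorSeries g x).radius))
    (hw : ‖w‖ₑ < (taylorSeries g x).radius) :
    HasSum (fun k => taylorSeries g x k fun _ => w) (g (x + w)) := by
  set p := taylorSeries g x
  have hp : 0 < p.radius := pos_of_gt hw
  obtain ⟨_, _, hg_ball⟩ := hg x (mem_eball_self hp)
  have hsum_eq : p.sum =ᶠ[nhds 0] fun v => g (x + v) := by
    filter_upwards [eball_mem_nhds 0 hg_ball.r_pos] with v hv
    exact (hg_ball.hasSum_iteratedFDeriv hv).tsum_eq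
  have hg_shift : AnalyticOnNhd ℝ (fun v => g (x + v)) (eball 0 p.radius) :=
    fun v hv => (hg (x + v) (by simpa [mem_eball, edist_eq_enorm_sub] using hv)).comp
      (analyticAt_const.add analyticAt_id)
  have hw' : w ∈ eball (0 : E) p.radius := mem_eball_zero_iff.2 hw
  have heq : p.sum w = g (x + w) :=
    (p.hasFPowerSeriesOnBall hp).analyticOnNhd.eqOn_of_preconnected_of_eventuallyEq
      hg_shift isPreconnected_eball (mem_eball_self hp) hsum_eq hw'
  exact heq ▸ p.hasSum hw'

end TaylorSeries

theorem hasSum_add_one_mul_pow {r : ℝ} (h0 : 0 ≤ r) (h1 : r < 1) :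
    HasSum (fun k : ℕ => ((k : ℝ) + 1) * r ^ k) ((1 - r) ^ 2)⁻¹ := by
  simpa using hasSum_choose_mul_geometric_of_norm_lt_one 1 (r := r)
    (by rwa [Real.norm_of_nonneg h0])

namespace FormalMultilinearSeries

variable {E F : Type*} [NormedAddCommGroup E] [NormedSpace ℝ E]
  [NormedAddCommGroup F] [NormedSpace ℝ F] {p : FormalMultilinearSeries ℝ E F} {γ : ℝ}

theorem enorm_lt_radius_of_norm_le_add_one_mul_pow (hp : ∀ k, ‖p k‖ ≤ (k + 1) * γ ^ k)
    (hγ : 0 ≤ γ) {w : E} (hw : γ * ‖w‖ < 1) : ‖w‖ₑ < p.radius := by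
  set t : ℝ≥0 := ⟨‖w‖ + (1 - γ * ‖w‖) / (γ + 1), by positivity⟩
  have hwt : ‖w‖ < t := lt_add_of_pos_right _ (by positivity)
  have hγt : γ * t < 1 := by
    have hstep : γ * ((1 - γ * ‖w‖) / (γ + 1)) < 1 - γ * ‖w‖ := by
      rw [mul_div_assoc', div_lt_iff₀ (by positivity)]
      nlinarith
    change γ * (‖w‖ + (1 - γ * ‖w‖) / (γ + 1)) < 1
    linarith [mul_add γ ‖w‖ ((1 - γ * ‖w‖) / (γ + 1))]
  have hsummable : Summable fun k => ‖p k‖ * (t : ℝ) ^ k := by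
    refine (hasSum_add_one_mul_pow (by positivity) hγt).summable.of_nonneg_of_le
      (fun _ => by positivity) fun k => ?_
    calc ‖p k‖ * (t : ℝ) ^ k ≤ (k + 1) * γ ^ k * (t : ℝ) ^ k := by gcongr; exact hp k
      _ = (k + 1) * (γ * t) ^ k := by rw [mul_pow, mul_assoc]
  calc ‖w‖ₑ = (‖w‖₊ : ℝ≥0∞) := rfl
    _ < t := ENNReal.coe_lt_coe.2 hwt
    _ ≤ p.radius := p.le_radius_of_summable hsummable

theorem norm_sub_coeff_zero_le_of_norm_le_add_one_mul_pow (hp : ∀ k, ‖p k‖ ≤ (k + 1) * γ ^ k)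
    (hγ : 0 ≤ γ) {w : E} (hw : γ * ‖w‖ < 1) {s : F}
    (hs : HasSum (fun k => p k fun _ => w) s) :
    ‖s - p 0 (fun _ => w)‖ ≤ ((1 - γ * ‖w‖) ^ 2)⁻¹ - 1 := by
  have hmajorant := (hasSum_nat_add_iff' 1).2 (hasSum_add_one_mul_pow (by positivity) hw)
  have htail := (hasSum_nat_add_iff' 1).2 hs
  simp only [Finset.sum_range_one, CharP.cast_eq_zero, zero_add, pow_zero, mul_one]
    at hmajorant htail
  refine htail.norm_le_of_bounded hmajorant fun k => ?_
  calc ‖p (k + 1) fun _ => w‖ ≤ ‖p (k + 1)‖ * ‖w‖ ^ (k + 1) :=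
        (p (k + 1)).le_opNorm_mul_pow_of_le (pi_norm_const_le w)
    _ ≤ ((k + 1 : ℕ) + 1) * γ ^ (k + 1) * ‖w‖ ^ (k + 1) := by gcongr; exact hp (k + 1)
    _ = _ := by push_cast; rw [mul_pow]; ring

end FormalMultilinearSeries

theorem psi_pos_of_lt {u : ℝ} (hu : u < 1 - Real.sqrt 2 / 2) : 0 < psi u := by
  have hsqrt : Real.sqrt 2 ^ 2 = 2 := Real.sq_sqrt zero_le_two
  have hfactor : psi u = 2 * (1 - Real.sqrt 2 / 2 - u) * (1 + Real.sqrt 2 / 2 - u) := by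
    rw [psi]; linear_combination (1 / 2 : ℝ) * hsqrt
  have : 0 < 1 + Real.sqrt 2 / 2 - u := by linarith [Real.sqrt_nonneg 2]
  rw [hfactor]
  have : 0 < 1 - Real.sqrt 2 / 2 - u := by linarith
  positivity

theorem two_sub_inv_one_sub_sq {u : ℝ} (hu : u ≠ 1) :
    2 - ((1 - u) ^ 2)⁻¹ = psi u / (1 - u) ^ 2 := by
  have : 1 - u ≠ 0 := sub_ne_zero.2 hu.symm
  rw [psi]
  field_simp
  ring

section Smale

variable {n : ℕ} {f : EuclideanSpace ℝ (Fin n) → EuclideanSpace ℝ (Fin n)}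
  {x : EuclideanSpace ℝ (Fin n)}

theorem smaleGamma_nonneg (hfin : BddAbove (Set.range fun k : ℕ => smaleTerm f x (k + 2))) :
    0 ≤ smaleGamma f x :=
  (Real.rpow_nonneg (by positivity) _).trans (le_ciSup hfin 0)

theorem norm_dfInv_comp_iteratedFDeriv_le
    (hfin : BddAbove (Set.range fun k : ℕ => smaleTerm f x (k + 2))) (k : ℕ) :
    ‖(dfInv f x).compContinuousMultilinearMap (iteratedFDeriv ℝ (k + 2) f x)‖ ≤
      (k + 2)! * smaleGamma f x ^ (k + 1) := by
  have hterm : smaleTerm f x (k + 2) ≤ smaleGamma f x := le_ciSup hfin k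
  have hexp : (1 : ℝ) / (((k + 2 : ℕ) : ℝ) - 1) = ((k + 1 : ℕ) : ℝ)⁻¹ := by push_cast; ring
  rwa [smaleTerm, hexp, Real.rpow_inv_le_iff_of_pos (by positivity) (smaleGamma_nonneg hfin)
    (by positivity), Real.rpow_natCast, div_le_iff₀ (by positivity), mul_comm] at hterm

theorem fderiv_dfInv_comp {z : EuclideanSpace ℝ (Fin n)} (hf : DifferentiableAt ℝ f z) :
    fderiv ℝ (dfInv f x ∘ f) z = (dfInv f x).comp (fderiv ℝ f z) :=
  ((dfInv f x).hasFDerivAt.comp z hf.hasFDerivAt).fderiv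

theorem fderiv_dfInv_comp_self (hx : IsUnit (fderiv ℝ f x)) (hf : DifferentiableAt ℝ f x) :
    fderiv ℝ (dfInv f x ∘ f) x = 1 := by
  rw [fderiv_dfInv_comp hf, dfInv, ← ContinuousLinearMap.mul_def, Ring.inverse_mul_cancel _ hx]

theorem norm_taylorSeries_fderiv_dfInv_comp_le (hf : ContDiff ℝ ∞ f)
    (hx : IsUnit (fderiv ℝ f x))
    (hfin : BddAbove (Set.range fun k : ℕ => smaleTerm f x (k + 2))) (k : ℕ) :
    ‖taylorSeries (fderiv ℝ (dfInv f x ∘ f)) x k‖ ≤ (k + 1) * smaleGamma f x ^ k := by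
  cases k with
  | zero =>
    simp only [taylorSeries, Nat.factorial_zero, Nat.cast_one, inv_one, one_smul,
      norm_iteratedFDeriv_zero, fderiv_dfInv_comp_self hx (hf.differentiable (by simp) x)]
    exact ContinuousLinearMap.norm_id_le.trans (by simp)
  | succ k =>
    rw [taylorSeries, norm_smul, norm_inv, Real.norm_natCast, norm_iteratedFDeriv_fderiv,
      (dfInv f x).iteratedFDeriv_comp_left hf.contDiffAt (by exact_mod_cast le_top),
      inv_mul_le_iff₀ (by positivity)]
    calc _ ≤ (k + 2)! * smaleGamma f x ^ (k + 1) := norm_dfInv_comp_iteratedFDeriv_le hfin k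
      _ = (k + 1)! * (((k + 1 : ℕ) + 1 : ℝ) * smaleGamma f x ^ (k + 1)) := by
        push_cast [Nat.factorial_succ]; ring

theorem fderiv_eq_mul_fderiv_dfInv_comp {y : EuclideanSpace ℝ (Fin n)}
    (hx : IsUnit (fderiv ℝ f x)) (hf : DifferentiableAt ℝ f y) :
    fderiv ℝ f y = fderiv ℝ f x * fderiv ℝ (dfInv f x ∘ f) y := by
  rw [fderiv_dfInv_comp hf, ← ContinuousLinearMap.mul_def, ← mul_assoc, dfInv,
    Ring.mul_inverse_cancel _ hx, one_mul]

theorem norm_fderiv_dfInv_comp_sub_one_le (hf : ∀ z, AnalyticAt ℝ f z)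
    (hx : IsUnit (fderiv ℝ f x))
    (hfin : BddAbove (Set.range fun k : ℕ => smaleTerm f x (k + 2)))
    {y : EuclideanSpace ℝ (Fin n)} (hν : ‖x - y‖ * smaleGamma f x < 1) :
    ‖fderiv ℝ (dfInv f x ∘ f) y - 1‖ ≤ ((1 - ‖x - y‖ * smaleGamma f x) ^ 2)⁻¹ - 1 := by
  have hγ := smaleGamma_nonneg hfin
  have hw : smaleGamma f x * ‖y - x‖ < 1 := by rwa [norm_sub_rev, mul_comm]
  have hcoeff := norm_taylorSeries_fderiv_dfInv_comp_le
    (AnalyticOnNhd.contDiff fun z _ => hf z) hx hfin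
  have hDg : AnalyticOnNhd ℝ (fderiv ℝ (dfInv f x ∘ f)) Set.univ :=
    AnalyticOnNhd.fderiv fun z _ => (dfInv f x).analyticAt _ |>.comp (hf z)
  have hsum : HasSum (fun k => taylorSeries (fderiv ℝ (dfInv f x ∘ f)) x k fun _ => y - x)
      (fderiv ℝ (dfInv f x ∘ f) y) := by
    simpa using hasSum_taylorSeries (hDg.mono (Set.subset_univ _))
      (FormalMultilinearSeries.enorm_lt_radius_of_norm_le_add_one_mul_pow hcoeff hγ hw)
  have h := FormalMultilinearSeries.norm_sub_coeff_zero_le_of_norm_le_add_one_mul_pow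
    hcoeff hγ hw hsum
  rwa [taylorSeries, Nat.factorial_zero, Nat.cast_one, inv_one, one_smul,
    iteratedFDeriv_zero_apply, fderiv_dfInv_comp_self hx (hf x).differentiableAt,
    norm_sub_rev y, mul_comm] at h

end Smale

/-- If `Df(x)` is invertible, `γ(f,x)` is finite, and `ν = ‖x-y‖γ(f,x) < 1-√2/2`,
then `Df(y)` is invertible and `‖Df(y)⁻¹ Df(x)‖ ≤ (1-ν)²/ψ(ν)`. -/
theorem dfInv_comp_df_bound {n : ℕ}
    (f : EuclideanSpace ℝ (Fin n) → EuclideanSpace ℝ (Fin n))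
    (hf : ∀ z, AnalyticAt ℝ f z)
    (x y : EuclideanSpace ℝ (Fin n))
    (hx : IsUnit (fderiv ℝ f x))
    (hfin : BddAbove (Set.range fun k : ℕ => smaleTerm f x (k + 2)))
    (hν : ‖x - y‖ * smaleGamma f x < 1 - Real.sqrt 2 / 2) :
    IsUnit (fderiv ℝ f y) ∧
      ‖(dfInv f y).comp (fderiv ℝ f x)‖ ≤
        (1 - ‖x - y‖ * smaleGamma f x) ^ 2 / psi (‖x - y‖ * smaleGamma f x) := by
  set ν := ‖x - y‖ * smaleGamma f x
  set g := dfInv f x ∘ f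
  have hν1 : ν < 1 := by linarith [Real.sqrt_nonneg 2]
  have hnear := norm_fderiv_dfInv_comp_sub_one_le hf hx hfin hν1
  have hgap : 0 < 2 - ((1 - ν) ^ 2)⁻¹ := two_sub_inv_one_sub_sq hν1.ne ▸
    div_pos (psi_pos_of_lt hν) (pow_pos (sub_pos.2 hν1) 2)
  have hnear' : ‖fderiv ℝ g y - 1‖ < 1 := by linarith
  have hDfy := fderiv_eq_mul_fderiv_dfInv_comp hx (hf y).differentiableAt
  refine ⟨hDfy ▸ hx.mul (isUnit_of_norm_sub_one_lt hnear'), ?_⟩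
  calc ‖(dfInv f y).comp (fderiv ℝ f x)‖ = ‖Ring.inverse (fderiv ℝ g y)‖ := by
        rw [← ContinuousLinearMap.mul_def, dfInv, hDfy, Ring.inverse_mul (.inl hx), mul_assoc,
          Ring.inverse_mul_cancel _ hx, mul_one]
    _ ≤ (1 - ‖fderiv ℝ g y - 1‖)⁻¹ :=
        norm_ringInverse_le_of_norm_sub_one_lt ContinuousLinearMap.norm_id_le hnear'
    _ ≤ (2 - ((1 - ν) ^ 2)⁻¹)⁻¹ := inv_anti₀ hgap (by linarith)
    _ = (1 - ν) ^ 2 / psi ν := by rw [two_sub_inv_one_sub_sq hν1.ne, inv_div]
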